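/- Let K be a field, A = K[e]/(e^4) with basis e_0 = 1, e_1, e_2, e_3. For θ_1, θ_2 ∈ K let W(θ_1,θ_2) = span{e_0, e_1 + θ_1 e_3, e_2 + θ_2 e_3}. Then for γ = e_0 - θ_2 e_1 - θ_1 e_2 (a unit of A), γ · W(θ_1, θ_2) = W(0,0). Consequently any two 3-dimensional subspaces of A containing e_0 but not e_3 are equivalent under multiplication by a unit of A. -/

import Mathlib

/-!
Since `e⁴ = 0`, multiplication by `γ = 1 - θ₂e - θ₁e²` sends `e + θ₁e³ ↦ e - θ₂e²` and
`e² + θ₂e³ ↦ e²`, so `γ·W(θ₁,θ₂) = span{γ, e - θ₂e², e²}`, a unitriangular change of the spanning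
set `{1, e, e²}`. Conversely, a hyperplane `V ∋ 1` missing `e³` is a complement of `K e³`, so it
contains `e + θ₁e³` and `e² + θ₂e³` for suitable `θᵢ`, and hence equals `W(θ₁,θ₂)`.
-/

open Polynomial Module

namespace Submodule

section Ring

variable {R M : Type*} [Ring R] [AddCommGroup M] [Module R M]

theorem span_insert_add_of_mem {x y : M} {s : Set M} (hy : y ∈ span R s) :
    span R (insert (x + y) s) = span R (insert x s) := by
  have hs : span R s ≤ span R (insert x s) := span_mono (Set.subset_insert _ _)
  have hs' : span R s ≤ span R (insert (x + y) s) := span_mono (Set.subset_insert _ _)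
  refine le_antisymm (span_le.2 (Set.insert_subset_iff.2 ⟨?_, subset_span.trans hs⟩))
    (span_le.2 (Set.insert_subset_iff.2 ⟨?_, subset_span.trans hs'⟩))
  · exact add_mem (subset_span (Set.mem_insert _ _)) (hs hy)
  · simpa using sub_mem (subset_span (Set.mem_insert _ _) : x + y ∈ span R (insert (x + y) s))
      (hs' hy)

theorem span_triple_add_smul_sup_span_singleton (x y z w : M) (a b : R) :
    span R {x, y + a • w, z + b • w} ⊔ R ∙ w = span R {x, y, z, w} := by
  rw [sup_comm, ← span_insert, Set.insert_comm w x, Set.insert_comm w, Set.pair_comm w,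
    span_insert x, span_insert_add_of_mem (smul_mem _ a (subset_span (by simp))),
    span_insert y, span_insert_add_of_mem (smul_mem _ b (mem_span_singleton_self w)),
    ← span_insert, ← span_insert]

theorem span_triple_unitriangular (x y z : M) (a b c : R) :
    span R {x - a • y - b • z, y - c • z, z} = span R {x, y, z} := by
  have hyz : span R {y - c • z, z} = span R {y, z} := by
    rw [sub_eq_add_neg, span_insert_add_of_mem (neg_mem (smul_mem _ c (mem_span_singleton_self z)))]
  have hsum : -(a • y + b • z) ∈ span R {y, z} :=
    neg_mem (add_mem (smul_mem _ _ (subset_span (by simp))) (smul_mem _ _ (subset_span (by simp))))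
  rw [span_insert, hyz, ← span_insert, sub_sub, sub_eq_add_neg, span_insert_add_of_mem hsum]

theorem exists_add_smul_mem_of_sup_eq_top {V : Submodule R M} {v : M}
    (h : V ⊔ R ∙ v = ⊤) (x : M) : ∃ c : R, x + c • v ∈ V := by
  obtain ⟨y, hy, z, hz, rfl⟩ := mem_sup.1 (h ▸ mem_top : x ∈ V ⊔ R ∙ v)
  obtain ⟨c, rfl⟩ := mem_span_singleton.1 hz
  exact ⟨-c, by simpa [add_assoc] using hy⟩

end Ring

section DivisionRing

variable {K M : Type*} [DivisionRing K] [AddCommGroup M] [Module K M]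

theorem eq_of_le_of_sup_span_singleton_eq_top {W V : Submodule K M} {v : M}
    (hWV : W ≤ V) (hv : v ∉ V) (h : W ⊔ K ∙ v = ⊤) : W = V := by
  refine le_antisymm hWV fun x hx => ?_
  obtain ⟨w, hw, z, hz, rfl⟩ := mem_sup.1 (h ▸ mem_top : x ∈ W ⊔ K ∙ v)
  obtain ⟨c, rfl⟩ := mem_span_singleton.1 hz
  obtain rfl : c = 0 := by
    by_contra hc
    exact hv ((smul_mem_iff V hc).1 (by simpa using sub_mem hx (hWV hw)))
  simpa using hw

theorem sup_span_singleton_eq_top_of_finrank_add_one [FiniteDimensional K M]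
    {V : Submodule K M} {v : M} (hV : finrank K V + 1 = finrank K M) (hv : v ∉ V) :
    V ⊔ K ∙ v = ⊤ :=
  eq_top_of_finrank_eq (by rw [finrank_sup_span_singleton hv, hV])

end DivisionRing

section Algebra

variable {R A : Type*} [CommSemiring R] [Semiring A] [Algebra R A]

theorem map_mulLeft_units_inv_mul {V₁ V₂ U : Submodule R A} {u₁ u₂ : Aˣ}
    (h₁ : map (LinearMap.mulLeft R (u₁ : A)) V₁ = U)
    (h₂ : map (LinearMap.mulLeft R (u₂ : A)) V₂ = U) :
    map (LinearMap.mulLeft R ↑(u₂⁻¹ * u₁)) V₁ = V₂ := by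
  rw [Units.val_mul, LinearMap.mulLeft_mul, map_comp, h₁, ← h₂, ← map_comp,
    ← LinearMap.mulLeft_mul, Units.inv_mul, LinearMap.mulLeft_one, map_id]

end Algebra

end Submodule

section Nilpotent

variable {R A : Type*} [CommRing R] [CommRing A] [Algebra R A] {e : A}

theorem isUnit_one_sub_smul_sub_smul_sq (he : IsNilpotent e) (a b : R) :
    IsUnit (1 - a • e - b • e ^ 2) := by
  rw [sub_sub]
  exact IsNilpotent.isUnit_one_sub
    ((Commute.all _ _).isNilpotent_add (he.smul a) ((he.pow_succ 1).smul b))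

theorem one_sub_smul_sub_smul_sq_mul_add_smul_cube (he : e ^ 4 = 0) (a b : R) :
    (1 - a • e - b • e ^ 2) * (e + b • e ^ 3) = e - a • e ^ 2 := by
  simp only [Algebra.smul_def]
  linear_combination (-(algebraMap R A a * algebraMap R A b) - algebraMap R A b ^ 2 * e) * he

theorem one_sub_smul_sub_smul_sq_mul_sq_add_smul_cube (he : e ^ 4 = 0) (a b : R) :
    (1 - a • e - b • e ^ 2) * (e ^ 2 + a • e ^ 3) = e ^ 2 := by
  simp only [Algebra.smul_def]
  linear_combination (-(algebraMap R A a ^ 2) - algebraMap R A b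
    - algebraMap R A a * algebraMap R A b * e) * he

theorem map_mulLeft_span_one_sub_smul_sub_smul_sq (he : e ^ 4 = 0) (θ₁ θ₂ : R) :
    Submodule.map (LinearMap.mulLeft R (1 - θ₂ • e - θ₁ • e ^ 2))
      (Submodule.span R {1, e + θ₁ • e ^ 3, e ^ 2 + θ₂ • e ^ 3}) =
      Submodule.span R {1, e, e ^ 2} := by
  rw [Submodule.map_span, Set.image_insert_eq, Set.image_insert_eq, Set.image_singleton]
  simp only [LinearMap.mulLeft_apply, mul_one, one_sub_smul_sub_smul_sq_mul_add_smul_cube he,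
    one_sub_smul_sub_smul_sq_mul_sq_add_smul_cube he]
  exact Submodule.span_triple_unitriangular 1 e (e ^ 2) θ₂ θ₁ θ₂

end Nilpotent

namespace AdjoinRoot

theorem root_X_pow_pow_self {R : Type*} [CommRing R] (n : ℕ) :
    root (X ^ n : R[X]) ^ n = 0 := by
  rw [← mk_X, ← map_pow, mk_self]

variable {K : Type*} [Field K]

theorem finrank_X_pow (n : ℕ) : finrank K (AdjoinRoot (X ^ n : K[X])) = n :=
  finrank_quotient_span_eq_natDegree.trans (natDegree_X_pow n)

theorem span_root_X_pow_four :
    Submodule.span K {1, root (X ^ 4 : K[X]), root (X ^ 4) ^ 2, root (X ^ 4) ^ 3} = ⊤ := by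
  set pb := powerBasis (pow_ne_zero 4 (X_ne_zero : (X : K[X]) ≠ 0))
  have hdim : pb.dim = 4 := by simp [pb]
  rw [eq_top_iff, ← pb.basis.span_eq, Submodule.span_le, pb.coe_basis]
  rintro _ ⟨⟨i, hi⟩, rfl⟩
  rw [hdim] at hi
  apply Submodule.subset_span
  interval_cases i <;> simp [pb]

theorem exists_eq_span_of_finrank_eq_three {V : Submodule K (AdjoinRoot (X ^ 4 : K[X]))}
    (hV : finrank K V = 3) (h1 : 1 ∈ V) (h3 : root (X ^ 4 : K[X]) ^ 3 ∉ V) :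
    ∃ θ₁ θ₂ : K, V = Submodule.span K
      {1, root (X ^ 4) + θ₁ • root (X ^ 4) ^ 3, root (X ^ 4) ^ 2 + θ₂ • root (X ^ 4) ^ 3} := by
  have : FiniteDimensional K (AdjoinRoot (X ^ 4 : K[X])) :=
    Module.finite_of_finrank_pos (by rw [finrank_X_pow]; norm_num)
  have hcompl : V ⊔ K ∙ root (X ^ 4) ^ 3 = ⊤ :=
    Submodule.sup_span_singleton_eq_top_of_finrank_add_one (by rw [hV, finrank_X_pow]) h3
  obtain ⟨θ₁, h₁⟩ := Submodule.exists_add_smul_mem_of_sup_eq_top hcompl (root (X ^ 4))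
  obtain ⟨θ₂, h₂⟩ := Submodule.exists_add_smul_mem_of_sup_eq_top hcompl (root (X ^ 4) ^ 2)
  refine ⟨θ₁, θ₂, (Submodule.eq_of_le_of_sup_span_singleton_eq_top ?_ h3 ?_).symm⟩
  · rw [Submodule.span_le]
    rintro x (rfl | rfl | rfl) <;> assumption
  · rw [Submodule.span_triple_add_smul_sup_span_singleton, span_root_X_pow_four]

end AdjoinRoot

open Polynomial in
/-- in `A = K[e]/(e^4)`, with `W(θ₁,θ₂) = span{1, e + θ₁e³, e² + θ₂e³}`
and `γ = 1 - θ₂e - θ₁e²`, the element `γ` is a unit and `γ·W(θ₁,θ₂) = W(0,0)`;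
consequently any two 3-dimensional subspaces of `A` containing `1` but not `e³`
are equivalent under multiplication by a unit of `A`. -/
theorem stmt_15 (K : Type*) [Field K]
    (e : AdjoinRoot (X ^ 4 : K[X])) (he : e = AdjoinRoot.root (X ^ 4 : K[X]))
    (W : K → K → Submodule K (AdjoinRoot (X ^ 4 : K[X])))
    (hW : ∀ θ₁ θ₂ : K, W θ₁ θ₂ =
      Submodule.span K {1, e + θ₁ • e ^ 3, e ^ 2 + θ₂ • e ^ 3}) :
    (∀ θ₁ θ₂ : K,
      IsUnit (1 - θ₂ • e - θ₁ • e ^ 2) ∧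
      Submodule.map (LinearMap.mulLeft K (1 - θ₂ • e - θ₁ • e ^ 2)) (W θ₁ θ₂) = W 0 0) ∧
    (∀ V₁ V₂ : Submodule K (AdjoinRoot (X ^ 4 : K[X])),
      Module.finrank K V₁ = 3 → Module.finrank K V₂ = 3 →
      (1 : AdjoinRoot (X ^ 4 : K[X])) ∈ V₁ → (1 : AdjoinRoot (X ^ 4 : K[X])) ∈ V₂ →
      e ^ 3 ∉ V₁ → e ^ 3 ∉ V₂ →
      ∃ γ : (AdjoinRoot (X ^ 4 : K[X]))ˣ,
        Submodule.map (LinearMap.mulLeft K (γ : AdjoinRoot (X ^ 4 : K[X]))) V₁ = V₂) := by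
  have he4 : e ^ 4 = 0 := he ▸ AdjoinRoot.root_X_pow_pow_self 4
  have hnormal : ∀ θ₁ θ₂ : K, IsUnit (1 - θ₂ • e - θ₁ • e ^ 2) ∧
      Submodule.map (LinearMap.mulLeft K (1 - θ₂ • e - θ₁ • e ^ 2)) (W θ₁ θ₂) = W 0 0 :=
    fun θ₁ θ₂ => ⟨isUnit_one_sub_smul_sub_smul_sq ⟨4, he4⟩ θ₂ θ₁, by
      rw [hW, hW, map_mulLeft_span_one_sub_smul_sub_smul_sq he4]
      simp only [zero_smul, add_zero]⟩
  refine ⟨hnormal, fun V₁ V₂ hV₁ hV₂ h1V₁ h1V₂ h3V₁ h3V₂ => ?_⟩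
  subst he
  obtain ⟨θ₁, θ₂, rfl⟩ := AdjoinRoot.exists_eq_span_of_finrank_eq_three hV₁ h1V₁ h3V₁
  obtain ⟨θ₁', θ₂', rfl⟩ := AdjoinRoot.exists_eq_span_of_finrank_eq_three hV₂ h1V₂ h3V₂
  obtain ⟨⟨u₁, hu₁⟩, hmap₁⟩ := hnormal θ₁ θ₂
  obtain ⟨⟨u₂, hu₂⟩, hmap₂⟩ := hnormal θ₁' θ₂'
  rw [← hu₁, hW] at hmap₁
  rw [← hu₂, hW] at hmap₂
  exact ⟨u₂⁻¹ * u₁, Submodule.map_mulLeft_units_inv_mul hmap₁ hmap₂⟩
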